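/- arXiv:1110.3310 — 5 statements merged into one kernel-verified Lean document; each statement's English description precedes it below -/
import Mathlib

section
/- Let p ≥ 1, q ≥ 1 be integers. The 2q+1 sets T_0 and T_{j,ε} (for 1 ≤ j ≤ q and ε ∈ {0,1}) cover T, i.e. T = T_0 ∪ ⋃_{j,ε} T_{j,ε}, and these 2q+1 sets have pairwise disjoint topological interiors (as subsets of ℝ^{p−1} × ℝ^q). (This is the set-level content of the subdivision rule for the (p+q)-torus: the tile Δ^{p−1} × I^q is subdivided into one copy of Δ^{p−1} × I^q and 2q pieces of type Δ^p × I^{q−1}.) -/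
/-!
Covering: if some `|2w_k - 1|` exceeds `s(x)`, a coordinate `j` maximising `|2w_j - 1|`,
together with the sign `ε` of `2w_j - 1`, gives a piece `T_{j,ε}` containing `(x, w)`.
Disjointness: two pieces `T_{j,ε}` and `T_{j,1-ε}` are disjoint outright, since both `1 - 2w_j`
and `2w_j - 1` would be `≥ s(x) ≥ 1/2`. Any other two pieces are separated by a function that
is `≥ 0` on one, `≤ 0` on the other, and strictly monotone in the coordinate `w_j`; such a
function is `< 0` on the interior of the second piece.
-/

open Set

/-- The standard `m`-simplex `{x ∈ ℝ^m : xᵢ ≥ 0, ∑ xᵢ ≤ 1}`. -/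
def stdSimplexSet (m : ℕ) : Set (Fin m → ℝ) :=
  {x | (∀ i, 0 ≤ x i) ∧ ∑ i, x i ≤ 1}

/-- The tile `T = Δ^{p-1} × [0,1]^q ⊆ ℝ^{p-1} × ℝ^q`. -/
def tileT (p q : ℕ) : Set ((Fin (p - 1) → ℝ) × (Fin q → ℝ)) :=
  {z | z.1 ∈ stdSimplexSet (p - 1) ∧ ∀ j, z.2 j ∈ Icc (0 : ℝ) 1}

/-- `s(x) = (1 + x₁ + ⋯ + x_{p-1})/2`. -/
noncomputable def sFun (p : ℕ) (x : Fin (p - 1) → ℝ) : ℝ := (1 + ∑ i, x i) / 2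

/-- The `2q+1` subtiles: `none` is `T₀ = {(x,w) ∈ T : max_j |2w_j - 1| ≤ s(x)}`,
and `some (j, ε)` is `T_{j,ε}`. -/
def subtile (p q : ℕ) : Option (Fin q × Bool) → Set ((Fin (p - 1) → ℝ) × (Fin q → ℝ))
  | none => {z ∈ tileT p q | ∀ j, |2 * z.2 j - 1| ≤ sFun p z.1}
  | some (j, e) =>
      {z ∈ tileT p q |
        (∀ k, |2 * z.2 k - 1| ≤ (if e then 2 * z.2 j - 1 else 1 - 2 * z.2 j)) ∧
        sFun p z.1 ≤ (if e then 2 * z.2 j - 1 else 1 - 2 * z.2 j)}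

/-- From a point of `interior B` one can still move a little along `v`, which strictly
increases `g`; so `g < 0` on `interior B`. -/
theorem disjoint_interior_of_strictMono_along {E : Type*} [TopologicalSpace E] [AddCommGroup E]
    [Module ℝ E] [ContinuousAdd E] [ContinuousSMul ℝ E] {g : E → ℝ} {v : E}
    (hg : ∀ z, ∀ t : ℝ, 0 < t → g z < g (z + t • v)) {A B : Set E}
    (hA : ∀ z ∈ A, 0 ≤ g z) (hB : ∀ z ∈ B, g z ≤ 0) :
    Disjoint (interior A) (interior B) := by
  refine Set.disjoint_left.2 fun z hzA hzB => ?_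
  have hline : Filter.Tendsto (fun t : ℝ => z + t • v) (nhds 0) (nhds z) := by
    simpa using (show Continuous fun t : ℝ => z + t • v by fun_prop).tendsto 0
  have hnear : ∀ᶠ t in nhdsWithin (0 : ℝ) (Ioi 0), z + t • v ∈ B :=
    (hline.eventually (mem_interior_iff_mem_nhds.1 hzB)).filter_mono nhdsWithin_le_nhds
  obtain ⟨t, hvB, ht⟩ := (hnear.and self_mem_nhdsWithin).exists
  linarith [hA z (interior_subset hzA), hB _ hvB, hg z t ht]

def signedDev (e : Bool) (w : ℝ) : ℝ := if e then 2 * w - 1 else 1 - 2 * w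

theorem signedDev_le_abs (e : Bool) (w : ℝ) : signedDev e w ≤ |2 * w - 1| := by
  cases e
  · exact (neg_sub (2 * w) 1).symm.trans_le (neg_le_abs _)
  · exact le_abs_self _

theorem exists_signedDev_eq_abs (w : ℝ) : ∃ e, signedDev e w = |2 * w - 1| := by
  rcases le_total 0 (2 * w - 1) with h | h
  · exact ⟨true, (abs_of_nonneg h).symm⟩
  · exact ⟨false, by rw [abs_of_nonpos h]; simp [signedDev]⟩

theorem signedDev_add_signedDev_not (e : Bool) (w : ℝ) :
    signedDev e w + signedDev (!e) w = 0 := by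
  cases e <;> simp [signedDev]

def signedDevDir (e : Bool) : ℝ := if e then 1 else -1

theorem signedDev_add_mul_dir (e : Bool) (w t : ℝ) :
    signedDev e (w + t * signedDevDir e) = signedDev e w + 2 * t := by
  cases e <;> simp [signedDev, signedDevDir] <;> ring

theorem signedDev_lt_add_smul_single {m q : ℕ} (j : Fin q) (e : Bool)
    (z : (Fin m → ℝ) × (Fin q → ℝ)) {t : ℝ} (ht : 0 < t) :
    signedDev e (z.2 j) < signedDev e ((z + t • (0, Pi.single j (signedDevDir e))).2 j) := by
  simp only [Prod.snd_add, Prod.smul_snd, Pi.add_apply, Pi.smul_apply, Pi.single_eq_same,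
    smul_eq_mul, signedDev_add_mul_dir]
  linarith

section Subtiles

variable {p q : ℕ}

theorem mem_subtile_none {z : (Fin (p - 1) → ℝ) × (Fin q → ℝ)} :
    z ∈ subtile p q none ↔ z ∈ tileT p q ∧ ∀ k, |2 * z.2 k - 1| ≤ sFun p z.1 :=
  Iff.rfl

theorem mem_subtile_some {z : (Fin (p - 1) → ℝ) × (Fin q → ℝ)} {j : Fin q} {e : Bool} :
    z ∈ subtile p q (some (j, e)) ↔ z ∈ tileT p q ∧
      (∀ k, |2 * z.2 k - 1| ≤ signedDev e (z.2 j)) ∧ sFun p z.1 ≤ signedDev e (z.2 j) :=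
  Iff.rfl

theorem subtile_subset_tileT (i : Option (Fin q × Bool)) : subtile p q i ⊆ tileT p q := by
  rcases i with _ | ⟨j, e⟩ <;> exact fun _ hz => hz.1

theorem tileT_subset_iUnion_subtile : tileT p q ⊆ ⋃ i, subtile p q i := by
  intro z hz
  rw [mem_iUnion]
  by_cases hT₀ : ∀ k, |2 * z.2 k - 1| ≤ sFun p z.1
  · exact ⟨none, hz, hT₀⟩
  obtain ⟨k₀, hk₀⟩ := not_forall.1 hT₀
  have : Nonempty (Fin q) := ⟨k₀⟩
  obtain ⟨j, hj⟩ := Finite.exists_max fun k => |2 * z.2 k - 1|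
  obtain ⟨e, he⟩ := exists_signedDev_eq_abs (z.2 j)
  refine ⟨some (j, e), mem_subtile_some.2 ⟨hz, fun k => he ▸ hj k, ?_⟩⟩
  linarith [hj k₀, not_le.1 hk₀]

theorem half_le_sFun {x : Fin (p - 1) → ℝ} (hx : x ∈ stdSimplexSet (p - 1)) :
    1 / 2 ≤ sFun p x := by
  have : 0 ≤ ∑ i, x i := Finset.sum_nonneg fun i _ => hx.1 i
  unfold sFun
  linarith

theorem disjoint_subtile_some_of_ne {j : Fin q} {e e' : Bool} (he : e ≠ e') :
    Disjoint (subtile p q (some (j, e))) (subtile p q (some (j, e'))) := by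
  refine Set.disjoint_left.2 fun z hz hz' => ?_
  obtain ⟨hT, -, hs⟩ := mem_subtile_some.1 hz
  obtain ⟨-, -, hs'⟩ := mem_subtile_some.1 hz'
  obtain rfl : e' = !e := Bool.eq_not_iff.2 he.symm
  linarith [half_le_sFun hT.1, signedDev_add_signedDev_not e (z.2 j)]

theorem disjoint_interior_subtile_some_none (j : Fin q) (e : Bool) :
    Disjoint (interior (subtile p q (some (j, e)))) (interior (subtile p q none)) := by
  refine disjoint_interior_of_strictMono_along (v := (0, Pi.single j (signedDevDir e)))
    (g := fun z => signedDev e (z.2 j) - sFun p z.1) (fun z t ht => ?_) (fun z hz => ?_)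
    (fun z hz => ?_)
  · have := signedDev_lt_add_smul_single j e z ht
    simp only [Prod.fst_add, Prod.smul_fst, smul_zero, add_zero]
    linarith
  · linarith [(mem_subtile_some.1 hz).2.2]
  · linarith [(mem_subtile_none.1 hz).2 j, signedDev_le_abs e (z.2 j)]

theorem disjoint_interior_subtile_some_some {j k : Fin q} (hjk : j ≠ k) (e e' : Bool) :
    Disjoint (interior (subtile p q (some (j, e)))) (interior (subtile p q (some (k, e')))) := by
  refine disjoint_interior_of_strictMono_along (v := (0, Pi.single j (signedDevDir e)))
    (g := fun z => signedDev e (z.2 j) - signedDev e' (z.2 k)) (fun z t ht => ?_)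
    (fun z hz => ?_) (fun z hz => ?_)
  · have := signedDev_lt_add_smul_single j e z ht
    simp only [Prod.snd_add, Prod.smul_snd, Pi.add_apply, Pi.smul_apply,
      Pi.single_eq_of_ne hjk.symm, smul_zero, add_zero] at this ⊢
    linarith
  · linarith [(mem_subtile_some.1 hz).2.1 k, signedDev_le_abs e' (z.2 k)]
  · linarith [(mem_subtile_some.1 hz).2.1 j, signedDev_le_abs e (z.2 j)]

end Subtiles

theorem torus_subdivision_cover_and_disjoint_interiors_general (p q : ℕ) :
    (tileT p q = ⋃ i : Option (Fin q × Bool), subtile p q i) ∧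
    Pairwise fun i i' : Option (Fin q × Bool) =>
      Disjoint (interior (subtile p q i)) (interior (subtile p q i')) := by
  refine ⟨tileT_subset_iUnion_subtile.antisymm (iUnion_subset subtile_subset_tileT), ?_⟩
  rintro (_ | ⟨j, e⟩) (_ | ⟨k, e'⟩) hne
  · exact absurd rfl hne
  · exact (disjoint_interior_subtile_some_none k e').symm
  · exact disjoint_interior_subtile_some_none j e
  · by_cases hjk : j = k
    · subst hjk
      have he : e ≠ e' := fun h => hne (h ▸ rfl)
      exact (disjoint_subtile_some_of_ne he).mono interior_subset interior_subset
    · exact disjoint_interior_subtile_some_some hjk e e'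

/-- The `2q+1` sets `T₀` and `T_{j,ε}` cover `T`, and they have pairwise disjoint
topological interiors. -/
theorem torus_subdivision_cover_and_disjoint_interiors (p q : ℕ) (hp : 1 ≤ p) (hq : 1 ≤ q) :
    (tileT p q = ⋃ i : Option (Fin q × Bool), subtile p q i) ∧
    Pairwise fun i i' : Option (Fin q × Bool) =>
      Disjoint (interior (subtile p q i)) (interior (subtile p q i')) :=
  torus_subdivision_cover_and_disjoint_interiors_general p q
end

section
/- The unit cube [0,1]^p is the union over all permutations σ of {1,…,p} of the p! simplices K_σ, i.e. [0,1]^p = ⋃_{σ ∈ S_p} K_σ. -/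
open Set

/-- The vertex `v_k^σ = e_{σ(1)} + ⋯ + e_{σ(k)}` of the simplex `K_σ`
(0-indexed: the sum of `e_{σ(i)}` over the first `k` indices `i`). -/
def cubeVtx (p : ℕ) (σ : Equiv.Perm (Fin p)) (k : ℕ) : Fin p → ℝ :=
  ∑ i ∈ Finset.univ.filter fun i : Fin p => (i : ℕ) < k, Pi.single (σ i) 1

/-- The simplex `K_σ`, the convex hull of the `p+1` points `v_0^σ, …, v_p^σ`. -/
def Ksimp (p : ℕ) (σ : Equiv.Perm (Fin p)) : Set (Fin p → ℝ) :=
  convexHull ℝ {x | ∃ k ≤ p, x = cubeVtx p σ k}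

/-- The unit cube `[0,1]^p`. -/
def unitCube (p : ℕ) : Set (Fin p → ℝ) :=
  {x | ∀ i, x i ∈ Icc (0 : ℝ) 1}

/-
Each point `x` of the cube lies in the simplex of a permutation `σ` listing its coordinates in
decreasing order: with the heights `a = (1, x_{σ(1)}, …, x_{σ(p)}, 0)`, which then decrease,
`x = ∑_k (a_k - a_{k+1}) v_k^σ` is a convex combination of the vertices. Conversely every
vertex lies in the convex cube.
-/

lemma cubeVtx_apply (p : ℕ) (σ : Equiv.Perm (Fin p)) (k : ℕ) (j : Fin p) :
    cubeVtx p σ k j = if (σ.symm j : ℕ) < k then 1 else 0 := by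
  simp only [cubeVtx, Finset.sum_apply, Pi.single_apply, ← Equiv.symm_apply_eq (e := σ),
    Finset.sum_ite_eq, Finset.mem_filter, Finset.mem_univ, true_and]

lemma unitCube_eq_pi (p : ℕ) : unitCube p = univ.pi fun _ => Icc 0 1 := by
  ext x
  simp only [unitCube, mem_ofPred_eq, mem_univ_pi]

lemma convex_unitCube (p : ℕ) : Convex ℝ (unitCube p) :=
  unitCube_eq_pi p ▸ convex_pi fun _ _ => convex_Icc 0 1

lemma cubeVtx_mem_unitCube (p : ℕ) (σ : Equiv.Perm (Fin p)) (k : ℕ) :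
    cubeVtx p σ k ∈ unitCube p := by
  intro j
  rw [cubeVtx_apply]
  split_ifs <;> norm_num

lemma Ksimp_subset_unitCube (p : ℕ) (σ : Equiv.Perm (Fin p)) : Ksimp p σ ⊆ unitCube p :=
  convexHull_min (by rintro _ ⟨k, -, rfl⟩; exact cubeVtx_mem_unitCube p σ k) (convex_unitCube p)

def heightSeq {p : ℕ} (y : Fin p → ℝ) : ℕ → ℝ
  | 0 => 1
  | k + 1 => if h : k < p then y ⟨k, h⟩ else 0

lemma heightSeq_antitone {p : ℕ} {y : Fin p → ℝ} (hy : Antitone y)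
    (hy01 : ∀ i, y i ∈ Icc (0 : ℝ) 1) : Antitone (heightSeq y) := by
  refine antitone_nat_of_succ_le fun k => ?_
  rcases k with _ | k
  · simp only [heightSeq]
    split_ifs with h
    exacts [(hy01 _).2, zero_le_one]
  · simp only [heightSeq]
    split_ifs with h₁ h₂ h₂
    · exact hy (Fin.mk_le_mk.mpr k.le_succ)
    · omega
    · exact (hy01 _).1
    · exact le_rfl

lemma sum_heightSeq_sub_smul_cubeVtx {p : ℕ} (σ : Equiv.Perm (Fin p)) (x : Fin p → ℝ) :
    ∑ k ∈ Finset.range (p + 1),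
      (heightSeq (x ∘ σ) k - heightSeq (x ∘ σ) (k + 1)) • cubeVtx p σ k = x := by
  funext j
  have hm : (σ.symm j : ℕ) < p := (σ.symm j).isLt
  have hfilter : (Finset.range (p + 1)).filter ((σ.symm j : ℕ) < ·) =
      Finset.Ico ((σ.symm j : ℕ) + 1) (p + 1) := by
    ext k
    simp only [Finset.mem_filter, Finset.mem_range, Finset.mem_Ico]
    omega
  simp only [Finset.sum_apply, Pi.smul_apply, cubeVtx_apply, smul_eq_mul, mul_ite, mul_one,
    mul_zero, ← Finset.sum_filter]
  rw [hfilter, Finset.sum_Ico_eq_sub _ (by omega), Finset.sum_range_sub', Finset.sum_range_sub']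
  simp [heightSeq, hm]

lemma mem_Ksimp_of_antitone {p : ℕ} {x : Fin p → ℝ} (hx : x ∈ unitCube p)
    {σ : Equiv.Perm (Fin p)} (hσ : Antitone (x ∘ σ)) : x ∈ Ksimp p σ := by
  have ha := heightSeq_antitone hσ fun i => hx (σ i)
  rw [← sum_heightSeq_sub_smul_cubeVtx σ x]
  refine (convex_convexHull ℝ _).sum_mem (fun k _ => sub_nonneg.mpr (ha k.le_succ)) ?_
    fun k hk => subset_convexHull ℝ _ ⟨k, Finset.mem_range_succ_iff.mp hk, rfl⟩
  rw [Finset.sum_range_sub']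
  simp [heightSeq]

lemma exists_perm_antitone_comp {α : Type*} [LinearOrder α] {p : ℕ} (x : Fin p → α) :
    ∃ σ : Equiv.Perm (Fin p), Antitone (x ∘ σ) :=
  ⟨Tuple.sort (OrderDual.toDual ∘ x), Tuple.monotone_sort (OrderDual.toDual ∘ x)⟩

theorem unitCube_eq_iUnion_Ksimp_general (p : ℕ) :
    unitCube p = ⋃ σ : Equiv.Perm (Fin p), Ksimp p σ := by
  refine Subset.antisymm (fun x hx => ?_) (iUnion_subset (Ksimp_subset_unitCube p))
  obtain ⟨σ, hσ⟩ := exists_perm_antitone_comp x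
  exact mem_iUnion.mpr ⟨σ, mem_Ksimp_of_antitone hx hσ⟩

/-- The unit cube `[0,1]^p` is the union of the `p!` simplices `K_σ`. -/
theorem unitCube_eq_iUnion_Ksimp (p : ℕ) (hp : 1 ≤ p) :
    unitCube p = ⋃ σ : Equiv.Perm (Fin p), Ksimp p σ :=
  unitCube_eq_iUnion_Ksimp_general p
end

section
/- If σ and τ are distinct permutations of {1,…,p}, then the topological interiors (in ℝ^p) of the simplices K_σ and K_τ are disjoint. -/
open Set

/-!
Every point of `K_σ` satisfies `x (σ 0) ≥ x (σ 1) ≥ ⋯`, since each vertex does and the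
condition is convex. At an interior point these inequalities must be strict (otherwise
raising the smaller coordinate slightly would leave `K_σ`), so `x` is injective and `σ`
is the unique permutation sorting its values decreasingly; a common interior point of
`K_σ` and `K_τ` therefore forces `σ = τ`.
-/

open Filter Topology Function

lemma cubeVtx_apply_perm (p : ℕ) (σ : Equiv.Perm (Fin p)) (k : ℕ) (j : Fin p) :
    cubeVtx p σ k (σ j) = if (j : ℕ) < k then 1 else 0 := by
  simp [cubeVtx, Finset.sum_apply, Pi.single_apply, σ.injective.eq_iff]

lemma antitone_cubeVtx_comp (p : ℕ) (σ : Equiv.Perm (Fin p)) (k : ℕ) :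
    Antitone (cubeVtx p σ k ∘ σ) := by
  intro i j hij
  simp only [comp_apply, cubeVtx_apply_perm]
  split_ifs <;> grind

lemma convex_setOf_antitone_comp {κ ι : Type*} [Preorder κ] (g : κ → ι) :
    Convex ℝ {x : ι → ℝ | Antitone (x ∘ g)} := by
  intro x hx y hy a b ha hb _
  exact (hx.const_smul ha).add (hy.const_smul hb)

lemma Ksimp_subset_setOf_antitone (p : ℕ) (σ : Equiv.Perm (Fin p)) :
    Ksimp p σ ⊆ {x | Antitone (x ∘ σ)} := by
  refine convexHull_min ?_ (convex_setOf_antitone_comp σ)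
  rintro _ ⟨k, -, rfl⟩
  exact antitone_cubeVtx_comp p σ k

lemma strictAnti_comp_of_mem_interior {κ ι : Type*} [Preorder κ] {g : κ → ι}
    (hg : Injective g) {x : ι → ℝ} (hx : x ∈ interior {y : ι → ℝ | Antitone (y ∘ g)}) :
    StrictAnti (x ∘ g) := by
  classical
  intro i j hij
  have hgij : g j ≠ g i := hg.ne hij.ne'
  have hline : Tendsto (fun t : ℝ => x + t • Pi.single (g j) 1) (𝓝 0) (𝓝 x) :=
    Continuous.tendsto' (by fun_prop) _ _ (by simp)
  have hpert : ∀ᶠ t in 𝓝[>] (0 : ℝ), Antitone ((x + t • Pi.single (g j) 1) ∘ g) :=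
    nhdsWithin_le_nhds (hline.eventually (mem_interior_iff_mem_nhds.mp hx))
  obtain ⟨t, hmono, ht : 0 < t⟩ := (hpert.and self_mem_nhdsWithin).exists
  have hshift : x (g j) + t ≤ x (g i) := by simpa [hgij.symm] using hmono hij.le
  exact lt_of_lt_of_le (lt_add_of_pos_right _ ht) hshift

lemma Equiv.Perm.eq_of_strictAnti_comp {α : Type*} [LinearOrder α] {n : ℕ} {x : Fin n → α}
    {σ τ : Equiv.Perm (Fin n)} (hσ : StrictAnti (x ∘ σ)) (hτ : StrictAnti (x ∘ τ)) :
    σ = τ := by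
  have hx : Injective x := by
    simpa using hσ.injective.comp σ.symm.injective
  ext i
  exact congrArg _ (hx (congrFun (Tuple.unique_antitone hσ.antitone hτ.antitone) i))

theorem Ksimp_interior_disjoint_general (p : ℕ) (σ τ : Equiv.Perm (Fin p))
    (hστ : σ ≠ τ) :
    Disjoint (interior (Ksimp p σ)) (interior (Ksimp p τ)) := by
  refine Set.disjoint_left.mpr fun x hxσ hxτ => hστ ?_
  have strictAnti_of_mem {π : Equiv.Perm (Fin p)} (h : x ∈ interior (Ksimp p π)) :
      StrictAnti (x ∘ π) :=
    strictAnti_comp_of_mem_interior π.injective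
      (interior_mono (Ksimp_subset_setOf_antitone p π) h)
  exact Equiv.Perm.eq_of_strictAnti_comp (strictAnti_of_mem hxσ) (strictAnti_of_mem hxτ)

/-- Distinct simplices `K_σ`, `K_τ` of the standard simplicial decomposition of the
cube have disjoint topological interiors. -/
theorem Ksimp_interior_disjoint (p : ℕ) (hp : 1 ≤ p) (σ τ : Equiv.Perm (Fin p))
    (hστ : σ ≠ τ) :
    Disjoint (interior (Ksimp p σ)) (interior (Ksimp p τ)) :=
  Ksimp_interior_disjoint_general p σ τ hστ
end

section
/- The star of the vertex 0, namely S = ⋃_{σ ∈ S_p} convexHull{v_0^σ, v_1^σ, …, v_{p−1}^σ}, equals {x ∈ [0,1]^p : x_i = 0 for some i}; the star of the opposite vertex (1,…,1), namely S* = ⋃_{σ ∈ S_p} convexHull{v_1^σ, …, v_p^σ}, equals {x ∈ [0,1]^p : x_i = 1 for some i}; and S ∪ S* equals the topological frontier of [0,1]^p in ℝ^p. -/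
open Set

/-- The star of the vertex `0` in the standard simplicial decomposition of the cube:
the union over `σ` of the convex hulls of `{v_0^σ, …, v_{p-1}^σ}`. -/
def starZero (p : ℕ) : Set (Fin p → ℝ) :=
  ⋃ σ : Equiv.Perm (Fin p), convexHull ℝ {x | ∃ k < p, x = cubeVtx p σ k}

/-- The star of the vertex `(1,…,1)`:
the union over `σ` of the convex hulls of `{v_1^σ, …, v_p^σ}`. -/
def starOne (p : ℕ) : Set (Fin p → ℝ) :=
  ⋃ σ : Equiv.Perm (Fin p), convexHull ℝ {x | ∃ k, 1 ≤ k ∧ k ≤ p ∧ x = cubeVtx p σ k}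

lemma frontier_unitCube (p : ℕ) :
    frontier (unitCube p) = {x ∈ unitCube p | ∃ i, x i = 0 ∨ x i = 1} := by
  rw [frontier, unitCube_eq_pi, closure_pi_set, interior_pi_set finite_univ, closure_Icc,
    interior_Icc]
  ext x
  simp only [mem_sdiff, Set.mem_pi, mem_univ, true_implies, mem_Icc, mem_Ioo, mem_ofPred_eq,
    not_forall, not_and_or, not_lt]
  refine and_congr_right fun hx => exists_congr fun i => ?_
  constructor
  · rintro (h | h)
    exacts [.inl (le_antisymm h (hx i).1), .inr (le_antisymm (hx i).2 h)]
  · rintro (h | h)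
    exacts [.inl h.le, .inr h.ge]

lemma convexHull_subset_unitCube_face {p : ℕ} {s : Set (Fin p → ℝ)} (hs : s ⊆ unitCube p)
    {j : Fin p} {c : ℝ} (hsj : ∀ y ∈ s, y j = c) :
    convexHull ℝ s ⊆ {x ∈ unitCube p | x j = c} :=
  convexHull_min (fun y hy => ⟨hs hy, hsj y hy⟩) <| (convex_unitCube p).inter <|
    convex_hyperplane (f := fun x : Fin p → ℝ => x j) ⟨fun _ _ => rfl, fun _ _ => rfl⟩ c

section Barycentric

variable {p : ℕ} (x : Fin p → ℝ) (σ : Equiv.Perm (Fin p))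

/-- `sortedCoord x σ k = x (σ (k - 1))` for `1 ≤ k ≤ p`, padded by `1` at `k = 0` and by `0`
beyond `p`; the barycentric coordinate of `x` at `cubeVtx p σ k` is
`sortedCoord x σ k - sortedCoord x σ (k + 1)`. -/
noncomputable def sortedCoord : ℕ → ℝ
  | 0 => 1
  | k + 1 => if h : k < p then x (σ ⟨k, h⟩) else 0

lemma sortedCoord_succ_le (hx : x ∈ unitCube p) (hσ : Antitone (x ∘ σ)) (k : ℕ) :
    sortedCoord x σ (k + 1) ≤ sortedCoord x σ k := by
  rcases k with _ | k
  · simp only [sortedCoord]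
    split_ifs
    exacts [(hx _).2, zero_le_one]
  · simp only [sortedCoord]
    split_ifs with h₁ h₂ h₂
    · exact hσ (Fin.mk_le_mk.2 k.le_succ)
    · omega
    · exact (hx _).1
    · exact le_rfl

lemma sum_sortedCoord_sub :
    ∑ k ∈ Finset.range (p + 1), (sortedCoord x σ k - sortedCoord x σ (k + 1)) = 1 := by
  rw [Finset.sum_range_sub']
  simp [sortedCoord]

lemma sum_sortedCoord_sub_smul_cubeVtx :
    ∑ k ∈ Finset.range (p + 1), (sortedCoord x σ k - sortedCoord x σ (k + 1)) • cubeVtx p σ k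
      = x := by
  ext j
  simp only [Finset.sum_apply, Pi.smul_apply, cubeVtx_apply, smul_eq_mul, mul_ite, mul_one,
    mul_zero, ← Finset.sum_filter]
  set m : ℕ := (σ.symm j : ℕ)
  have hm : m < p := (σ.symm j).isLt
  have hfilter : {k ∈ Finset.range (p + 1) | m < k} = Finset.Ico (m + 1) (p + 1) := by
    ext k
    simp only [Finset.mem_filter, Finset.mem_range, Finset.mem_Ico]
    omega
  rw [hfilter, Finset.sum_Ico_eq_sub _ (by omega), Finset.sum_range_sub', Finset.sum_range_sub']
  simp [sortedCoord, hm, m]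

lemma mem_convexHull_cubeVtx_of_antitone (hx : x ∈ unitCube p) (hσ : Antitone (x ∘ σ))
    {s : Set (Fin p → ℝ)}
    (hs : ∀ k ≤ p, sortedCoord x σ (k + 1) ≠ sortedCoord x σ k → cubeVtx p σ k ∈ s) :
    x ∈ convexHull ℝ s := by
  set w : ℕ → ℝ := fun k => sortedCoord x σ k - sortedCoord x σ (k + 1)
  set t := {k ∈ Finset.range (p + 1) | w k ≠ 0}
  have hw : ∑ k ∈ t, w k = 1 := by
    rw [Finset.sum_filter_ne_zero]
    exact sum_sortedCoord_sub x σ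
  have hmem := (convex_convexHull ℝ s).sum_mem (t := t) (w := w) (z := cubeVtx p σ)
    (fun k _ => sub_nonneg.2 (sortedCoord_succ_le x σ hx hσ k)) hw fun k hk => by
      rw [Finset.mem_filter, Finset.mem_range] at hk
      exact subset_convexHull ℝ s (hs k (by omega) fun h => hk.2 (by simp [w, h]))
  rwa [Finset.sum_filter_of_ne (fun k _ h => left_ne_zero_of_smul h),
    sum_sortedCoord_sub_smul_cubeVtx] at hmem

end Barycentric

lemma starZero_eq (p : ℕ) : starZero p = {x ∈ unitCube p | ∃ i, x i = 0} := by
  refine Subset.antisymm (iUnion_subset fun σ y hy => ?_) fun x ⟨hx, i, hi⟩ => ?_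
  · obtain ⟨_, k, hk, -⟩ := convexHull_nonempty_iff.1 ⟨y, hy⟩
    have hface := convexHull_subset_unitCube_face (j := σ ⟨p - 1, by omega⟩) (c := 0)
      (by rintro _ ⟨k, -, rfl⟩; exact cubeVtx_mem_unitCube p σ k)
      (by rintro _ ⟨k, hk, rfl⟩; simp only [cubeVtx_apply, Equiv.symm_apply_apply]; grind) hy
    exact ⟨hface.1, _, hface.2⟩
  · obtain ⟨σ, hσ⟩ := exists_perm_antitone_comp x
    refine mem_iUnion.2 ⟨σ, mem_convexHull_cubeVtx_of_antitone x σ hx hσ fun k hk hne =>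
      ⟨k, lt_of_le_of_ne hk ?_, rfl⟩⟩
    rintro rfl
    obtain ⟨q, rfl⟩ := Nat.exists_eq_succ_of_ne_zero i.pos.ne'
    have hmin : x (σ ⟨q, q.lt_succ_self⟩) = 0 :=
      le_antisymm (hi ▸ σ.apply_symm_apply i ▸ hσ (Fin.le_last _)) (hx _).1
    simp [sortedCoord, hmin] at hne

lemma starOne_eq (p : ℕ) : starOne p = {x ∈ unitCube p | ∃ i, x i = 1} := by
  refine Subset.antisymm (iUnion_subset fun σ y hy => ?_) fun x ⟨hx, i, hi⟩ => ?_
  · obtain ⟨_, k, hk, hkp, -⟩ := convexHull_nonempty_iff.1 ⟨y, hy⟩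
    have hface := convexHull_subset_unitCube_face (j := σ ⟨0, by omega⟩) (c := 1)
      (by rintro _ ⟨k, -, -, rfl⟩; exact cubeVtx_mem_unitCube p σ k)
      (by rintro _ ⟨k, hk, -, rfl⟩; simp only [cubeVtx_apply, Equiv.symm_apply_apply]; grind) hy
    exact ⟨hface.1, _, hface.2⟩
  · obtain ⟨σ, hσ⟩ := exists_perm_antitone_comp x
    refine mem_iUnion.2 ⟨σ, mem_convexHull_cubeVtx_of_antitone x σ hx hσ fun k hk hne =>
      ⟨k, Nat.one_le_iff_ne_zero.2 ?_, hk, rfl⟩⟩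
    rintro rfl
    have hmax : x (σ ⟨0, i.pos⟩) = 1 :=
      le_antisymm (hx _).2 (hi ▸ σ.apply_symm_apply i ▸ hσ (Fin.le_def.2 (Nat.zero_le _)))
    simp [sortedCoord, i.pos, hmax] at hne

theorem star_descriptions_general (p : ℕ) :
    starZero p = {x ∈ unitCube p | ∃ i, x i = 0} ∧
    starOne p = {x ∈ unitCube p | ∃ i, x i = 1} ∧
    starZero p ∪ starOne p = frontier (unitCube p) := by
  refine ⟨starZero_eq p, starOne_eq p, ?_⟩
  rw [starZero_eq, starOne_eq, frontier_unitCube]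
  ext x
  simp only [mem_union, mem_ofPred_eq, ← and_or_left, ← exists_or]

/-- `S = {x ∈ [0,1]^p : some xᵢ = 0}`, `S* = {x ∈ [0,1]^p : some xᵢ = 1}`, and
`S ∪ S*` is the topological frontier of the cube. -/
theorem star_descriptions (p : ℕ) (hp : 1 ≤ p) :
    starZero p = {x ∈ unitCube p | ∃ i, x i = 0} ∧
    starOne p = {x ∈ unitCube p | ∃ i, x i = 1} ∧
    starZero p ∪ starOne p = frontier (unitCube p) :=
  star_descriptions_general p
end

section
/- Let n ≥ 1 and k ≥ 0 be integers, and let B(k) = ⋃ { v + [0,1]^n : v ∈ ℤ^n, ∑_{i=1}^n |v_i| ≤ k } ⊆ ℝ^n, the union of the unit lattice cubes whose base vertices lie in the ℓ¹ ball of radius k (the union of fundamental domains of the n-torus at word-distance at most k from the identity). Then B(k) is homeomorphic to the closed unit ball of ℝ^n, and its topological frontier S(k) = ∂B(k) is homeomorphic to the sphere S^{n−1}. -/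
/-!
`B(k)` is strictly star-shaped about the centre `c = (1/2, …, 1/2)` of the base cube: if `x` lies
in the cube `v + [0,1]ⁿ`, then every point of the half-open segment `[c, x)` lies in the open box
`∏ (-|vᵢ|, |vᵢ| + 1)`, and this box lies in `B(k)` because the floor of each of its points has
`ℓ¹` norm at most `∑ |vᵢ|`.

For a closed bounded neighbourhood `s` of `0` which is strictly star-shaped about `0`, the
Minkowski gauge is continuous (its strict sublevel sets are the open sets `r • interior s`, its
sublevel sets the closed sets `r • s`), `s = {gauge s ≤ 1}` and `frontier s = {gauge s = 1}`.
Rescaling each ray so that one gauge is carried to the other is then a homeomorphism of the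
ambient space carrying one such set onto another and frontier onto frontier; we apply it to the
closed unit ball and to an affine copy of `B(k)` centred at `0`.
-/

open Set

/-- `B(k) ⊆ ℝⁿ`: the union of the unit lattice cubes `v + [0,1]ⁿ` over base vertices
`v ∈ ℤⁿ` with `‖v‖₁ ≤ k`, i.e. the union of the fundamental domains of the `n`-torus at
word-distance at most `k` from the identity. -/
def Bset (n k : ℕ) : Set (Fin n → ℝ) :=
  {x | ∃ v : Fin n → ℤ, (∑ i, (v i).natAbs) ≤ k ∧ ∀ i, x i ∈ Icc ((v i : ℝ)) (v i + 1)}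

open Metric Filter Topology Bornology
open scoped Pointwise

def StrictStarConvex {E : Type*} [AddCommMonoid E] [SMul ℝ E] [TopologicalSpace E]
    (x : E) (s : Set E) : Prop :=
  ∀ ⦃y : E⦄, y ∈ s → ∀ ⦃a b : ℝ⦄, 0 < a → 0 ≤ b → a + b = 1 → a • x + b • y ∈ interior s

section StrictStarConvex

variable {E : Type*} [AddCommGroup E] [Module ℝ E] [TopologicalSpace E] {s : Set E} {x : E}

theorem Convex.strictStarConvex [IsTopologicalAddGroup E] [ContinuousConstSMul ℝ E]
    (hs : Convex ℝ s) (hx : x ∈ interior s) : StrictStarConvex x s :=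
  fun _ hy _ _ ha hb hab => hs.combo_interior_self_mem_interior hx hy ha hb hab

theorem StrictStarConvex.mem_interior (hs : StrictStarConvex x s) (hne : s.Nonempty) :
    x ∈ interior s := by
  obtain ⟨y, hy⟩ := hne
  simpa using hs hy one_pos le_rfl (add_zero 1)

theorem StrictStarConvex.smul_mem_interior (hs : StrictStarConvex 0 s) (hx : x ∈ s) {t : ℝ}
    (ht₀ : 0 ≤ t) (ht₁ : t < 1) : t • x ∈ interior s := by
  simpa using hs hx (sub_pos.2 ht₁) ht₀ (sub_add_cancel 1 t)

theorem StrictStarConvex.affine_preimage {F : Type*} [AddCommGroup F] [Module ℝ F]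
    [TopologicalSpace F] {s : Set F} (f : E ≃ᴬ[ℝ] F) (hs : StrictStarConvex (f x) s) :
    StrictStarConvex x (f ⁻¹' s) := by
  intro y hy a b ha hb hab
  change _ ∈ interior (f.toHomeomorph ⁻¹' s)
  rw [← f.toHomeomorph.preimage_interior]
  change f.toAffineEquiv.toAffineMap (a • x + b • y) ∈ interior s
  rw [Convex.combo_affine_apply hab]
  exact hs hy ha hb hab

end StrictStarConvex

section Gauge

variable {E : Type*} [AddCommGroup E] [Module ℝ E] [TopologicalSpace E] {s t : Set E} {x : E}

theorem image_gaugeRescale_setOfPred_gauge [T1Space E] (hsa : Absorbent ℝ s)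
    (hsb : IsVonNBounded ℝ s) (hta : Absorbent ℝ t) (htb : IsVonNBounded ℝ t) (p : ℝ → Prop) :
    gaugeRescale s t '' {x | p (gauge s x)} = {y | p (gauge t y)} := by
  ext y
  constructor
  · rintro ⟨x, hx, rfl⟩
    rwa [mem_ofPred_eq, gauge_gaugeRescale _ hta htb]
  · intro hy
    refine ⟨gaugeRescale t s y, ?_, ?_⟩
    · rwa [mem_ofPred_eq, gauge_gaugeRescale _ hsa hsb]
    · rw [gaugeRescale_gaugeRescale hsa hsb, gaugeRescale_self_apply hta htb]

variable [ContinuousSMul ℝ E]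

theorem StrictStarConvex.gauge_lt_one_iff_mem_interior (hs : StrictStarConvex 0 s)
    (ha : Absorbent ℝ s) : gauge s x < 1 ↔ x ∈ interior s := by
  refine ⟨fun h => ?_, fun h => interior_subset_gauge_lt_one s h⟩
  obtain ⟨b, hb₀, hb₁, y, hy, rfl⟩ := exists_lt_of_gauge_lt ha h
  exact hs.smul_mem_interior hy hb₀.le hb₁

theorem StrictStarConvex.gauge_le_one_iff_mem (hs : StrictStarConvex 0 s) (ha : Absorbent ℝ s)
    (hsc : IsClosed s) : gauge s x ≤ 1 ↔ x ∈ s := by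
  refine ⟨fun h => hsc.closure_subset_iff.2 subset_rfl ?_, gauge_le_one_of_mem⟩
  have : ∀ᶠ r : ℝ in 𝓝[<] 1, r • x ∈ s := by
    filter_upwards [Ico_mem_nhdsLT one_pos] with r ⟨hr₀, hr₁⟩
    refine interior_subset ((hs.gauge_lt_one_iff_mem_interior ha).1 ?_)
    rw [gauge_smul_of_nonneg hr₀, smul_eq_mul]
    exact mul_lt_one_of_nonneg_of_lt_one_left hr₀ hr₁ h
  refine mem_closure_of_tendsto ?_ this
  exact Tendsto.mono_left (Continuous.tendsto' (by fun_prop) _ _ (one_smul _ _)) inf_le_left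

theorem StrictStarConvex.gauge_eq_one_iff_mem_frontier (hs : StrictStarConvex 0 s)
    (ha : Absorbent ℝ s) (hsc : IsClosed s) : gauge s x = 1 ↔ x ∈ frontier s := by
  rw [hsc.frontier_eq, eq_iff_le_not_lt, hs.gauge_le_one_iff_mem ha hsc,
    hs.gauge_lt_one_iff_mem_interior ha]
  rfl

theorem StrictStarConvex.gauge_lt_iff_mem_smul_interior (hs : StrictStarConvex 0 s)
    (ha : Absorbent ℝ s) {r : ℝ} (hr : 0 < r) : gauge s x < r ↔ x ∈ r • interior s := by
  rw [mem_smul_set_iff_inv_smul_mem₀ hr.ne', ← hs.gauge_lt_one_iff_mem_interior ha,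
    gauge_smul_of_nonneg (inv_nonneg.2 hr.le), smul_eq_mul, inv_mul_lt_one₀ hr]

theorem StrictStarConvex.gauge_le_iff_mem_smul (hs : StrictStarConvex 0 s) (ha : Absorbent ℝ s)
    (hsc : IsClosed s) {r : ℝ} (hr : 0 < r) : gauge s x ≤ r ↔ x ∈ r • s := by
  rw [mem_smul_set_iff_inv_smul_mem₀ hr.ne', ← hs.gauge_le_one_iff_mem ha hsc,
    gauge_smul_of_nonneg (inv_nonneg.2 hr.le), smul_eq_mul, inv_mul_le_one₀ hr]

theorem StrictStarConvex.upperSemicontinuous_gauge (hs : StrictStarConvex 0 s)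
    (ha : Absorbent ℝ s) : UpperSemicontinuous (gauge s) := by
  refine upperSemicontinuous_iff_isOpen_preimage.2 fun r => ?_
  rcases le_or_gt r 0 with hr | hr
  · convert isOpen_empty
    exact eq_empty_of_forall_notMem fun x hx => (gauge_nonneg x).trans_lt hx |>.not_ge hr
  · rw [show gauge s ⁻¹' Iio r = r • interior s from
      ext fun x => hs.gauge_lt_iff_mem_smul_interior ha hr]
    exact isOpen_interior.smul₀ hr.ne'

theorem StrictStarConvex.lowerSemicontinuous_gauge (hs : StrictStarConvex 0 s)
    (ha : Absorbent ℝ s) (hsc : IsClosed s) : LowerSemicontinuous (gauge s) := by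
  refine lowerSemicontinuous_iff_isClosed_preimage.2 fun r => ?_
  rcases lt_or_ge r 0 with hr | hr
  · convert isClosed_empty
    exact eq_empty_of_forall_notMem fun x hx => (gauge_nonneg x).trans hx |>.not_gt hr
  · have : gauge s ⁻¹' Iic r = ⋂ q ∈ Ioi r, q • s := by
      ext x
      simp only [mem_preimage, mem_Iic, mem_iInter₂, mem_Ioi]
      exact ⟨fun hx q hq => (hs.gauge_le_iff_mem_smul ha hsc (hr.trans_lt hq)).1 (hx.trans hq.le),
        fun hx => le_of_forall_gt_imp_ge_of_dense fun q hq =>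
          (hs.gauge_le_iff_mem_smul ha hsc (hr.trans_lt hq)).2 (hx q hq)⟩
    rw [this]
    exact isClosed_biInter fun q hq => hsc.smul_of_ne_zero (hr.trans_lt hq).ne'

theorem StrictStarConvex.continuous_gauge (hs : StrictStarConvex 0 s) (ha : Absorbent ℝ s)
    (hsc : IsClosed s) : Continuous (gauge s) :=
  continuous_iff_lower_upperSemicontinuous.2
    ⟨hs.lowerSemicontinuous_gauge ha hsc, hs.upperSemicontinuous_gauge ha⟩

variable [T1Space E]

theorem continuous_gaugeRescale_of_continuous_gauge (hs : Continuous (gauge s))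
    (ht : Continuous (gauge t)) (ht₀ : t ∈ 𝓝 0) (htb : IsVonNBounded ℝ t) :
    Continuous (gaugeRescale s t) := by
  have hta : Absorbent ℝ t := absorbent_nhds_zero ht₀
  refine continuous_iff_continuousAt.2 fun x ↦ ?_
  rcases eq_or_ne x 0 with rfl | hx
  · rw [ContinuousAt, gaugeRescale_zero]
    nth_rewrite 2 [← comap_gauge_nhds_zero htb ht₀]
    simp only [tendsto_comap_iff, Function.comp_def, gauge_gaugeRescale _ hta htb]
    simpa only [gauge_zero] using hs.tendsto 0
  · exact (hs.continuousAt.div ht.continuousAt ((gauge_pos hta htb).2 hx).ne').smul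
      continuousAt_id

theorem StrictStarConvex.exists_homeomorph_image_eq (hs : StrictStarConvex 0 s) (hs₀ : s ∈ 𝓝 0)
    (hsc : IsClosed s) (hsb : IsVonNBounded ℝ s) (ht : StrictStarConvex 0 t) (ht₀ : t ∈ 𝓝 0)
    (htc : IsClosed t) (htb : IsVonNBounded ℝ t) :
    ∃ e : E ≃ₜ E, e '' s = t ∧ e '' frontier s = frontier t := by
  have hsa : Absorbent ℝ s := absorbent_nhds_zero hs₀
  have hta : Absorbent ℝ t := absorbent_nhds_zero ht₀
  have hgs := hs.continuous_gauge hsa hsc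
  have hgt := ht.continuous_gauge hta htc
  refine ⟨{ toEquiv := gaugeRescaleEquiv s t hsa hsb hta htb
            continuous_toFun := continuous_gaugeRescale_of_continuous_gauge hgs hgt ht₀ htb
            continuous_invFun := continuous_gaugeRescale_of_continuous_gauge hgt hgs hs₀ hsb },
    ?_, ?_⟩
  · have h := image_gaugeRescale_setOfPred_gauge hsa hsb hta htb (· ≤ 1)
    simp only [hs.gauge_le_one_iff_mem hsa hsc, ht.gauge_le_one_iff_mem hta htc,
      ofPred_mem_eq] at h
    exact h
  · have h := image_gaugeRescale_setOfPred_gauge hsa hsb hta htb (· = 1)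
    simp only [hs.gauge_eq_one_iff_mem_frontier hsa hsc, ht.gauge_eq_one_iff_mem_frontier hta htc,
      ofPred_mem_eq] at h
    exact h

end Gauge

theorem StrictStarConvex.exists_homeomorph_image_closedBall_eq {E : Type*}
    [NormedAddCommGroup E] [NormedSpace ℝ E] {s : Set E} (hs : StrictStarConvex 0 s)
    (hsc : IsClosed s) (hsb : IsBounded s) (hne : s.Nonempty) :
    ∃ e : E ≃ₜ E, e '' closedBall 0 1 = s ∧ e '' sphere 0 1 = frontier s := by
  have hball : StrictStarConvex (0 : E) (closedBall 0 1) :=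
    (convex_closedBall 0 1).strictStarConvex
      (ball_subset_interior_closedBall (mem_ball_self one_pos))
  rw [← frontier_closedBall (0 : E) one_ne_zero]
  exact hball.exists_homeomorph_image_eq (closedBall_mem_nhds 0 one_pos) isClosed_closedBall
    (NormedSpace.isVonNBounded_closedBall ℝ E 1) hs
    (mem_interior_iff_mem_nhds.1 (hs.mem_interior hne)) hsc
    (NormedSpace.isVonNBounded_of_isBounded ℝ hsb)

theorem isCompact_Bset (n k : ℕ) : IsCompact (Bset n k) := by
  have hunion : Bset n k = ⋃ v ∈ {v : Fin n → ℤ | ∑ i, (v i).natAbs ≤ k},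
      univ.pi fun i => Icc (v i : ℝ) (v i + 1) := by
    ext x
    simp only [Bset, mem_ofPred_eq, mem_iUnion, exists_prop, mem_univ_pi]
  rw [hunion]
  refine Finite.isCompact_biUnion ?_ fun v _ => isCompact_univ_pi fun i => isCompact_Icc
  refine (Finite.pi fun _ : Fin n => finite_Icc (-(k : ℤ)) k).subset fun v hv i _ => ?_
  have hvi : (v i).natAbs ≤ k :=
    (Finset.single_le_sum (fun j _ => Nat.zero_le (v j).natAbs) (Finset.mem_univ i)).trans hv
  constructor <;> omega

theorem pi_ball_subset_Bset {n k : ℕ} (M : Fin n → ℕ) (hM : ∑ i, M i ≤ k) :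
    (univ.pi fun i => ball (1 / 2 : ℝ) (M i + 1 / 2)) ⊆ Bset n k := by
  intro x hx
  refine ⟨fun i => ⌊x i⌋, (Finset.sum_le_sum fun i _ => ?_).trans hM,
    fun i => ⟨Int.floor_le _, (Int.lt_floor_add_one _).le⟩⟩
  have h := abs_lt.1 (mem_ball_iff_norm.1 (hx i (mem_univ i)))
  have hlo : -(M i : ℤ) ≤ ⌊x i⌋ := Int.le_floor.2 (by push_cast; linarith)
  have hhi : ⌊x i⌋ < M i + 1 := Int.floor_lt.2 (by push_cast; linarith)
  dsimp only
  omega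

theorem strictStarConvex_Bset (n k : ℕ) : StrictStarConvex (fun _ => 1 / 2) (Bset n k) := by
  rintro x ⟨v, hv, hx⟩ a b ha hb hab
  refine interior_maximal (pi_ball_subset_Bset (fun i => (v i).natAbs) hv)
    (isOpen_set_pi finite_univ fun i _ => isOpen_ball) fun i _ => ?_
  have hvi : |(v i : ℝ)| = (v i).natAbs := by rw [Nat.cast_natAbs, Int.cast_abs]
  have hxi : |x i - 1 / 2| ≤ (v i).natAbs + 1 / 2 := by
    rw [abs_le, ← hvi]
    constructor <;> linarith [(hx i).1, (hx i).2, neg_abs_le (v i : ℝ), le_abs_self (v i : ℝ)]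
  have hcomb : (a • (fun _ => 1 / 2) + b • x : Fin n → ℝ) i - 1 / 2 = b * (x i - 1 / 2) := by
    simp only [Pi.add_apply, Pi.smul_apply, smul_eq_mul]
    linear_combination (1 / 2 : ℝ) * hab
  rw [mem_ball, Real.dist_eq, hcomb, abs_mul, abs_of_nonneg hb]
  calc b * |x i - 1 / 2| ≤ b * ((v i).natAbs + 1 / 2) := mul_le_mul_of_nonneg_left hxi hb
    _ < (v i).natAbs + 1 / 2 := (mul_lt_iff_lt_one_left (by positivity)).2 (by linarith)

theorem Bset_ball_and_frontier_sphere_general (n k : ℕ) :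
    Nonempty (↥(Bset n k) ≃ₜ ↥(Metric.closedBall (0 : EuclideanSpace ℝ (Fin n)) 1)) ∧
    Nonempty (↥(frontier (Bset n k)) ≃ₜ
      ↥(Metric.sphere (0 : EuclideanSpace ℝ (Fin n)) 1)) := by
  let φ : EuclideanSpace ℝ (Fin n) ≃ᴬ[ℝ] (Fin n → ℝ) :=
    (EuclideanSpace.equiv (Fin n) ℝ).toContinuousAffineEquiv.trans
      (ContinuousAffineEquiv.vaddConst ℝ fun _ => 1 / 2)
  have hφ0 : φ 0 = fun _ => 1 / 2 := by simp [φ]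
  have hK : IsCompact (φ ⁻¹' Bset n k) := φ.toHomeomorph.isCompact_preimage.2 (isCompact_Bset n k)
  have hKstar : StrictStarConvex 0 (φ ⁻¹' Bset n k) :=
    .affine_preimage φ (by rw [hφ0]; exact strictStarConvex_Bset n k)
  have h0K : 0 ∈ φ ⁻¹' Bset n k := by
    rw [mem_preimage, hφ0]
    exact ⟨0, by simp, fun i => by norm_num⟩
  obtain ⟨e, he, he'⟩ :=
    hKstar.exists_homeomorph_image_closedBall_eq hK.isClosed hK.isBounded ⟨0, h0K⟩
  let ψ : EuclideanSpace ℝ (Fin n) ≃ₜ (Fin n → ℝ) := e.trans φ.toHomeomorph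
  have hψ : ∀ A B, e '' A = φ ⁻¹' B → ψ '' A = B := fun A B h => by
    rw [show ⇑ψ = φ.toHomeomorph ∘ e from rfl, image_comp, h]
    exact φ.toHomeomorph.image_preimage B
  have hB := hψ _ _ he
  have hS := hψ _ _ (he'.trans (φ.toHomeomorph.preimage_frontier _).symm)
  exact ⟨⟨((ψ.image _).trans (.setCongr hB)).symm⟩, ⟨((ψ.image _).trans (.setCongr hS)).symm⟩⟩

/-- `B(k)` is homeomorphic to the closed unit ball of `ℝⁿ`, and its topological frontier
`S(k) = ∂B(k)` is homeomorphic to the sphere `S^{n-1}`. -/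
theorem Bset_ball_and_frontier_sphere (n k : ℕ) (hn : 1 ≤ n) :
    Nonempty (↥(Bset n k) ≃ₜ ↥(Metric.closedBall (0 : EuclideanSpace ℝ (Fin n)) 1)) ∧
    Nonempty (↥(frontier (Bset n k)) ≃ₜ
      ↥(Metric.sphere (0 : EuclideanSpace ℝ (Fin n)) 1)) :=
  Bset_ball_and_frontier_sphere_general n k
end
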